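/- With f(V) = −trace(Vᵀ A V (Vᵀ B V)^{-1}) + α trace(Vᵀ Ã V (Vᵀ B̃ V)^{-1}) and the Euclidean gradient D f(V) as computed, we have Vᵀ (∂f/∂V) = 0 for every full-rank V; consequently the Riemannian gradient of f on the Stiefel manifold, grad f(V) = Df(V) − V·sym(Vᵀ Df(V)), equals the Euclidean derivative Df(V). -/

import Mathlib

/-!
Writing `M = Vᵀ B V` (invertible since `B` is positive definite and `V` has orthonormal columns),
`Df` is a linear combination of two matrices of the form `A V M⁻¹ - B V M⁻¹ (Vᵀ A V) M⁻¹`, and multiplying on the left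
by `Vᵀ` gives `Vᵀ A V M⁻¹ - M M⁻¹ (Vᵀ A V) M⁻¹ = 0`. Hence `Vᵀ Df = 0`, the symmetric part
`sym(Vᵀ Df)` vanishes, and the tangent projection leaves `Df` unchanged.
-/

open Matrix

namespace Matrix

variable {m n : Type*} [Fintype m] [Fintype n]

lemma sub_mul_symm_part_eq_self_of_transpose_mul_eq_zero {R : Type*} [CommRing R]
    {V D : Matrix n m R} (h : Vᵀ * D = 0) (c : R) : D - V * (c • (Vᵀ * D + (Vᵀ * D)ᵀ)) = D := by
  simp [h]

variable [DecidableEq m]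

lemma PosDef.transpose_mul_mul_of_transpose_mul_self_eq_one {B : Matrix n n ℝ} (hB : B.PosDef)
    {V : Matrix n m ℝ} (hV : Vᵀ * V = 1) : (Vᵀ * B * V).PosDef := by
  have hinj : Function.Injective V.mulVec :=
    Function.LeftInverse.injective (g := Vᵀ.mulVec) fun x => by rw [mulVec_mulVec, hV, one_mulVec]
  simpa only [conjTranspose_eq_transpose_of_trivial] using hB.conjTranspose_mul_mul_same hinj

variable {R : Type*} [CommRing R]

/-- Up to the factor `-2`, the Euclidean gradient of `V ↦ trace (Vᵀ A V (Vᵀ B V)⁻¹)`. -/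
noncomputable def traceQuotientGrad (A B : Matrix n n R) (V : Matrix n m R) : Matrix n m R :=
  A * V * (Vᵀ * B * V)⁻¹ - B * V * (Vᵀ * B * V)⁻¹ * (Vᵀ * A * V) * (Vᵀ * B * V)⁻¹

lemma transpose_mul_traceQuotientGrad_eq_zero {A B : Matrix n n R} {V : Matrix n m R}
    (hM : IsUnit (Vᵀ * B * V).det) : Vᵀ * traceQuotientGrad A B V = 0 := by
  have hMM : Vᵀ * B * V * (Vᵀ * B * V)⁻¹ = 1 := mul_nonsing_inv _ hM
  calc Vᵀ * traceQuotientGrad A B V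
      = Vᵀ * A * V * (Vᵀ * B * V)⁻¹
          - (Vᵀ * B * V * (Vᵀ * B * V)⁻¹) * (Vᵀ * A * V) * (Vᵀ * B * V)⁻¹ := by
        simp only [traceQuotientGrad, Matrix.mul_sub, Matrix.mul_assoc]
    _ = 0 := by rw [hMM, Matrix.one_mul, sub_self]

end Matrix

theorem stmt_8_general {p d : ℕ} (A At B Bt : Matrix (Fin p) (Fin p) ℝ)
    (hB : B.PosDef) (hBt : Bt.PosDef)
    (α : ℝ)
    (V : Matrix (Fin p) (Fin d) ℝ) (hV : Vᵀ * V = 1) :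
    let Df : Matrix (Fin p) (Fin d) ℝ :=
      -((2 : ℝ) • (A * V * (Vᵀ * B * V)⁻¹))
        + (2 : ℝ) • (B * V * (Vᵀ * B * V)⁻¹ * (Vᵀ * A * V) * (Vᵀ * B * V)⁻¹)
        + (2 * α) • (At * V * (Vᵀ * Bt * V)⁻¹
            - Bt * V * (Vᵀ * Bt * V)⁻¹ * (Vᵀ * At * V) * (Vᵀ * Bt * V)⁻¹)
    Vᵀ * Df = 0 ∧ Df - V * ((1 / 2 : ℝ) • (Vᵀ * Df + (Vᵀ * Df)ᵀ)) = Df := by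
  intro Df
  have hDf : Df = -(2 : ℝ) • traceQuotientGrad A B V + (2 * α) • traceQuotientGrad At Bt V := by
    simp only [Df, traceQuotientGrad, smul_sub, neg_smul]
    abel
  have hM := (hB.transpose_mul_mul_of_transpose_mul_self_eq_one hV).det_pos.ne'.isUnit
  have hMt := (hBt.transpose_mul_mul_of_transpose_mul_self_eq_one hV).det_pos.ne'.isUnit
  have hVDf : Vᵀ * Df = 0 := by
    rw [hDf, Matrix.mul_add, Matrix.mul_smul, Matrix.mul_smul,
      transpose_mul_traceQuotientGrad_eq_zero hM, transpose_mul_traceQuotientGrad_eq_zero hMt,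
      smul_zero, smul_zero, add_zero]
  exact ⟨hVDf, sub_mul_symm_part_eq_self_of_transpose_mul_eq_zero hVDf _⟩

/-- On the Stiefel manifold, the Euclidean derivative `Df(V)` of the CIR loss
satisfies `Vᵀ Df(V) = 0`; consequently the Riemannian gradient
`Df(V) − V·sym(Vᵀ Df(V))` equals `Df(V)`. -/
theorem stmt_8 {p d : ℕ} (A At B Bt : Matrix (Fin p) (Fin p) ℝ)
    (hA : A.IsSymm) (hAt : At.IsSymm) (hB : B.PosDef) (hBt : Bt.PosDef)
    (α : ℝ) (hα : 0 ≤ α)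
    (V : Matrix (Fin p) (Fin d) ℝ) (hV : Vᵀ * V = 1) :
    let Df : Matrix (Fin p) (Fin d) ℝ :=
      -((2 : ℝ) • (A * V * (Vᵀ * B * V)⁻¹))
        + (2 : ℝ) • (B * V * (Vᵀ * B * V)⁻¹ * (Vᵀ * A * V) * (Vᵀ * B * V)⁻¹)
        + (2 * α) • (At * V * (Vᵀ * Bt * V)⁻¹
            - Bt * V * (Vᵀ * Bt * V)⁻¹ * (Vᵀ * At * V) * (Vᵀ * Bt * V)⁻¹)
    Vᵀ * Df = 0 ∧ Df - V * ((1 / 2 : ℝ) • (Vᵀ * Df + (Vᵀ * Df)ᵀ)) = Df :=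
  stmt_8_general A At B Bt hB hBt α V hV
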